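/- Let H be a complex Hilbert space, let A be a Hilbert–Schmidt operator on H, and let 0 ≤ ν ≤ 1. Let T denote the block operator on H ⊕ H given by T = [[0, A],[A, 0]] (i.e., T(x, y) = (Ay, Ax)). Then w_{(2,ν)}(T) = √2 · w_{(2,ν)}(A). -/

import Mathlib

variable {H : Type*} [NormedAddCommGroup H] [InnerProductSpace ℂ H] [CompleteSpace H]

/-- The operator `ν e^{iθ} A + (1-ν) e^{-iθ} A*`. -/
noncomputable def weightedPart {E : Type*} [NormedAddCommGroup E] [InnerProductSpace ℂ E]
    [CompleteSpace E] (ν θ : ℝ) (A : E →L[ℂ] E) : E →L[ℂ] E :=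
  ((ν : ℂ) * Complex.exp (θ * Complex.I)) • A +
    (((1 - ν : ℝ) : ℂ) * Complex.exp (-(θ * Complex.I))) • ContinuousLinearMap.adjoint A

/-- The Hilbert–Schmidt norm `‖A‖₂ = √(∑ᵢ ‖A eᵢ‖²)` computed w.r.t. a Hilbert basis `e`. -/
noncomputable def hsNorm {E : Type*} [NormedAddCommGroup E] [InnerProductSpace ℂ E]
    {ι : Type*} (e : HilbertBasis ι ℂ E) (A : E →L[ℂ] E) : ℝ :=
  Real.sqrt (∑' i, ‖A (e i)‖ ^ 2)

/-- The trace `tr(T) = ∑ᵢ ⟨eᵢ, T eᵢ⟩` computed w.r.t. a Hilbert basis `e`. -/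
noncomputable def trBasis {E : Type*} [NormedAddCommGroup E] [InnerProductSpace ℂ E]
    {ι : Type*} (e : HilbertBasis ι ℂ E) (T : E →L[ℂ] E) : ℂ :=
  ∑' i, (inner ℂ (e i) (T (e i)) : ℂ)

/-- The weighted Hilbert–Schmidt numerical radius
`w_{(2,ν)}(A) = sup_{θ ∈ ℝ} ‖ν e^{iθ} A + (1-ν) e^{-iθ} A*‖₂`. -/
noncomputable def wHS {E : Type*} [NormedAddCommGroup E] [InnerProductSpace ℂ E]
    [CompleteSpace E] {ι : Type*} (e : HilbertBasis ι ℂ E) (ν : ℝ) (A : E →L[ℂ] E) : ℝ :=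
  ⨆ θ : ℝ, hsNorm e (weightedPart ν θ A)

/-- The block operator `[[X, Y],[Z, W]]` on the Hilbert space direct sum `H ⊕₂ H`,
mapping `(x, y)` to `(Xx + Yy, Zx + Wy)`. -/
noncomputable def blockOp (X Y Z W : H →L[ℂ] H) :
    WithLp 2 (H × H) →L[ℂ] WithLp 2 (H × H) :=
  ((WithLp.prodContinuousLinearEquiv 2 ℂ H H).symm.toContinuousLinearMap).comp
    ((((X.comp (ContinuousLinearMap.fst ℂ H H)) + (Y.comp (ContinuousLinearMap.snd ℂ H H))).prod
      ((Z.comp (ContinuousLinearMap.fst ℂ H H)) + (W.comp (ContinuousLinearMap.snd ℂ H H)))).comp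
      (WithLp.prodContinuousLinearEquiv 2 ℂ H H).toContinuousLinearMap)

/-! The Hilbert–Schmidt norm does not depend on the Hilbert basis: both `‖A‖₂²` and `‖A*‖₂²`
equal `∑ᵢⱼ |⟨fⱼ, A eᵢ⟩|²`. Forming weighted parts commutes with `B ↦ [[0, B], [B, 0]]`, and in
the basis `(eᵢ, 0), (0, eᵢ)` of `H ⊕ H` this block has `‖·‖₂² = 2 ‖B‖₂²`, for every `θ`; the
factor `√2` then passes through the supremum. -/

open scoped ENNReal InnerProductSpace
open ContinuousLinearMap (adjoint)

namespace HilbertBasis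

variable {𝕜 E F ι κ : Type*} [RCLike 𝕜] [NormedAddCommGroup E] [InnerProductSpace 𝕜 E]
  [NormedAddCommGroup F] [InnerProductSpace 𝕜 F]

theorem hasSum_norm_inner_sq (e : HilbertBasis ι 𝕜 E) (x : E) :
    HasSum (fun i => ‖⟪e i, x⟫_𝕜‖ ^ 2) (‖x‖ ^ 2) := by
  have h := (e.hasSum_inner_mul_inner x x).mapL RCLike.reCLM
  have hterm (i : ι) : ‖⟪e i, x⟫_𝕜‖ ^ 2 = RCLike.re (⟪x, e i⟫_𝕜 * ⟪e i, x⟫_𝕜) := by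
    rw [← inner_conj_symm x (e i), RCLike.conj_mul]
    norm_cast
  simpa only [hterm, RCLike.reCLM_apply, inner_self_eq_norm_sq] using h

theorem ofReal_norm_sq_eq_tsum (e : HilbertBasis ι 𝕜 E) (x : E) :
    ENNReal.ofReal (‖x‖ ^ 2) = ∑' i, ENNReal.ofReal (‖⟪e i, x⟫_𝕜‖ ^ 2) := by
  rw [← (e.hasSum_norm_inner_sq x).tsum_eq]
  exact ENNReal.ofReal_tsum_of_nonneg (fun i => sq_nonneg _) (e.hasSum_norm_inner_sq x).summable

theorem eq_zero_of_forall_inner_eq_zero (e : HilbertBasis ι 𝕜 E) {x : E}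
    (hx : ∀ i, ⟪e i, x⟫_𝕜 = 0) : x = 0 :=
  (e.hasSum_repr x).unique (by simp [e.repr_apply_apply, hx])

variable [CompleteSpace E] [CompleteSpace F]

protected noncomputable def prod (e : HilbertBasis ι 𝕜 E) (f : HilbertBasis κ 𝕜 F) :
    HilbertBasis (ι ⊕ κ) 𝕜 (WithLp 2 (E × F)) :=
  HilbertBasis.mkOfOrthogonalEqBot
    (v := Sum.elim (fun i => WithLp.toLp 2 (e i, 0)) (fun j => WithLp.toLp 2 (0, f j)))
    (by
      classical
      rw [orthonormal_iff_ite]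
      rintro (i | i) (j | j) <;>
        simp [WithLp.prod_inner_apply, orthonormal_iff_ite.mp e.orthonormal,
          orthonormal_iff_ite.mp f.orthonormal])
    (by
      refine (Submodule.eq_bot_iff _).mpr fun x hx => ?_
      have hmem (k : ι ⊕ κ) := hx _ (Submodule.subset_span (Set.mem_range_self k))
      have hfst : x.fst = 0 := e.eq_zero_of_forall_inner_eq_zero fun i => by
        simpa [WithLp.prod_inner_apply] using hmem (.inl i)
      have hsnd : x.snd = 0 := f.eq_zero_of_forall_inner_eq_zero fun j => by
        simpa [WithLp.prod_inner_apply] using hmem (.inr j)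
      exact WithLp.ofLp_injective 2 (Prod.ext hfst hsnd))

theorem coe_prod (e : HilbertBasis ι 𝕜 E) (f : HilbertBasis κ 𝕜 F) :
    ⇑(e.prod f) = Sum.elim (fun i => WithLp.toLp 2 (e i, 0)) (fun j => WithLp.toLp 2 (0, f j)) :=
  HilbertBasis.coe_mkOfOrthogonalEqBot _ _

end HilbertBasis

section HilbertSchmidt

variable {𝕜 E ι κ : Type*} [RCLike 𝕜] [NormedAddCommGroup E] [InnerProductSpace 𝕜 E]

/-- `‖A‖₂²`, valued in `ℝ≥0∞` so that it is `∞` rather than a junk `0` when `A` is not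
Hilbert–Schmidt. -/
noncomputable def hsNormSq (e : HilbertBasis ι 𝕜 E) (A : E →L[𝕜] E) : ℝ≥0∞ :=
  ∑' i, ENNReal.ofReal (‖A (e i)‖ ^ 2)

variable [CompleteSpace E]

theorem hsNormSq_eq_hsNormSq_adjoint (e : HilbertBasis ι 𝕜 E) (f : HilbertBasis κ 𝕜 E)
    (A : E →L[𝕜] E) : hsNormSq e A = hsNormSq f (adjoint A) :=
  calc ∑' i, ENNReal.ofReal (‖A (e i)‖ ^ 2)
      = ∑' i, ∑' j, ENNReal.ofReal (‖⟪f j, A (e i)⟫_𝕜‖ ^ 2) :=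
        tsum_congr fun i => f.ofReal_norm_sq_eq_tsum (A (e i))
    _ = ∑' j, ∑' i, ENNReal.ofReal (‖⟪e i, adjoint A (f j)⟫_𝕜‖ ^ 2) := by
        rw [ENNReal.tsum_comm]
        refine tsum_congr fun j => tsum_congr fun i => ?_
        rw [← ContinuousLinearMap.adjoint_inner_left, norm_inner_symm]
    _ = ∑' j, ENNReal.ofReal (‖adjoint A (f j)‖ ^ 2) :=
        tsum_congr fun j => (e.ofReal_norm_sq_eq_tsum (adjoint A (f j))).symm

theorem hsNormSq_congr_basis (e : HilbertBasis ι 𝕜 E) (f : HilbertBasis κ 𝕜 E)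
    (A : E →L[𝕜] E) : hsNormSq e A = hsNormSq f A := by
  rw [hsNormSq_eq_hsNormSq_adjoint e f, hsNormSq_eq_hsNormSq_adjoint f f,
    ContinuousLinearMap.adjoint_adjoint]

end HilbertSchmidt

theorem hsNorm_eq_sqrt_toReal_hsNormSq {E ι : Type*} [NormedAddCommGroup E]
    [InnerProductSpace ℂ E] (e : HilbertBasis ι ℂ E) (A : E →L[ℂ] E) :
    hsNorm e A = √(hsNormSq e A).toReal := by
  rw [hsNorm, hsNormSq, ENNReal.tsum_toReal_eq fun _ => ENNReal.ofReal_ne_top]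
  simp only [ENNReal.toReal_ofReal (sq_nonneg _)]

section BlockOperator

omit [CompleteSpace H] in
theorem blockOp_apply (X Y Z W : H →L[ℂ] H) (v : WithLp 2 (H × H)) :
    blockOp X Y Z W v = WithLp.toLp 2 (X v.fst + Y v.snd, Z v.fst + W v.snd) := by
  simp [blockOp]

theorem adjoint_blockOp_antidiag (A : H →L[ℂ] H) :
    adjoint (blockOp 0 A A 0) = blockOp 0 (adjoint A) (adjoint A) 0 := by
  refine ((ContinuousLinearMap.eq_adjoint_iff _ _).mpr fun x y => ?_).symm
  simp [blockOp_apply, WithLp.prod_inner_apply, ContinuousLinearMap.adjoint_inner_left]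
  ring

theorem weightedPart_blockOp_antidiag (ν θ : ℝ) (A : H →L[ℂ] H) :
    weightedPart ν θ (blockOp 0 A A 0) =
      blockOp 0 (weightedPart ν θ A) (weightedPart ν θ A) 0 := by
  ext v
  simp [weightedPart, adjoint_blockOp_antidiag, blockOp_apply, ← WithLp.toLp_smul,
    ← WithLp.toLp_add]

theorem hsNormSq_blockOp_antidiag {ι : Type*} (e : HilbertBasis ι ℂ H) (B : H →L[ℂ] H) :
    hsNormSq (e.prod e) (blockOp 0 B B 0) = 2 * hsNormSq e B := by
  rw [hsNormSq, ENNReal.summable.tsum_sum ENNReal.summable, two_mul]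
  congr 1 <;> exact tsum_congr fun i => by simp [e.coe_prod, blockOp_apply]

theorem hsNorm_blockOp_antidiag {ι κ : Type*} (e : HilbertBasis ι ℂ H)
    (f : HilbertBasis κ ℂ (WithLp 2 (H × H))) (B : H →L[ℂ] H) :
    hsNorm f (blockOp 0 B B 0) = √2 * hsNorm e B := by
  rw [hsNorm_eq_sqrt_toReal_hsNormSq, hsNorm_eq_sqrt_toReal_hsNormSq,
    hsNormSq_congr_basis f (e.prod e), hsNormSq_blockOp_antidiag, ENNReal.toReal_mul,
    ENNReal.toReal_ofNat, Real.sqrt_mul zero_le_two]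

end BlockOperator

theorem stmt13_general {ι κ : Type*} (e : HilbertBasis ι ℂ H)
    (f : HilbertBasis κ ℂ (WithLp 2 (H × H)))
    (A : H →L[ℂ] H)
    (ν : ℝ) :
    wHS f ν (blockOp 0 A A 0) = Real.sqrt 2 * wHS e ν A := by
  simp only [wHS, weightedPart_blockOp_antidiag, hsNorm_blockOp_antidiag e f]
  exact (Real.mul_iSup_of_nonneg (Real.sqrt_nonneg 2) _).symm

theorem stmt13 {ι κ : Type*} (e : HilbertBasis ι ℂ H)
    (f : HilbertBasis κ ℂ (WithLp 2 (H × H)))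
    (A : H →L[ℂ] H) (hA : Summable fun i => ‖A (e i)‖ ^ 2)
    (ν : ℝ) (hν₀ : 0 ≤ ν) (hν₁ : ν ≤ 1) :
    wHS f ν (blockOp 0 A A 0) = Real.sqrt 2 * wHS e ν A :=
  stmt13_general e f A ν
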